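/- Let E be a lextensive category. Then the class of complemented inclusions and the class of split epimorphisms form a weak factorisation system on E. -/

import Mathlib

open CategoryTheory Limits

universe v u

/-- A morphism is a complemented inclusion if it is isomorphic to a coproduct inclusion
`A ↪ A + C`, i.e. if it admits a complement `g : C ⟶ B` exhibiting `B` as the coproduct
of `A` and `C` with `f` as the first coproduct inclusion. -/
def IsComplementedInclusion {E : Type u} [Category.{v} E] {A B : E} (f : A ⟶ B) : Prop :=
  ∃ (C : E) (g : C ⟶ B), Nonempty (IsColimit (BinaryCofan.mk f g))

/-- A weak factorisation system on a category: every map factors as a map in `L` followed by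
a map in `R`, and the two classes determine each other by the lifting property. -/
def IsWFS {C : Type*} [Category C] (L R : MorphismProperty C) : Prop :=
  (∀ {X Y : C} (f : X ⟶ Y), ∃ (Z : C) (i : X ⟶ Z) (p : Z ⟶ Y), L i ∧ R p ∧ i ≫ p = f) ∧
    (∀ {X Y : C} (f : X ⟶ Y),
      L f ↔ ∀ {A B : C} (g : A ⟶ B), R g → HasLiftingProperty f g) ∧
    (∀ {X Y : C} (f : X ⟶ Y),
      R f ↔ ∀ {A B : C} (g : A ⟶ B), L g → HasLiftingProperty g f)

/-- The class of complemented inclusions. -/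
def complementedInclusions (E : Type u) [Category.{v} E] : MorphismProperty E :=
  fun _ _ f => IsComplementedInclusion f

/-- The class of split epimorphisms. -/
def splitEpis (E : Type u) [Category.{v} E] : MorphismProperty E :=
  fun _ _ f => IsSplitEpi f

/-!
Every `f : X ⟶ Y` factors as `coprod.inl : X ⟶ X ⨿ Y` followed by the split epimorphism
`coprod.desc f (𝟙 Y)`, and a complemented inclusion `A ⟶ A ⨿ C` lifts against a split
epimorphism `p` by using the given map on `A` and a section of `p` on `C`. By the retract
argument it then suffices that both classes are closed under retracts. For split epimorphisms
this is immediate; a retract of a complemented inclusion `g` is a pullback of `g` because `g` is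
monic, and in an extensive category pulling back a coproduct decomposition yields one again.
-/

lemma CategoryTheory.MorphismProperty.IsWeakFactorizationSystem.isWFS {C : Type*} [Category C]
    {L R : MorphismProperty C} (h : L.IsWeakFactorizationSystem R) : IsWFS L R := by
  refine ⟨fun f => ?_, fun f => ?_, fun f => ?_⟩
  · let d := MorphismProperty.factorizationData L R f
    exact ⟨d.Z, d.i, d.p, d.hi, d.hp, d.fac⟩
  · rw [← MorphismProperty.llp_eq_of_wfs L R]
    exact ⟨fun hf _ _ g hg => hf g hg, fun hf _ _ g hg => hf g hg⟩
  · rw [← MorphismProperty.rlp_eq_of_wfs L R]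
    exact ⟨fun hf _ _ g hg => hf g hg, fun hf _ _ g hg => hf g hg⟩

lemma CategoryTheory.RetractArrow.isPullback_of_mono {C : Type*} [Category C] {X Y A B : C}
    {f : X ⟶ Y} {g : A ⟶ B} (h : RetractArrow f g) [Mono g] :
    IsPullback f h.i.left h.i.right g := by
  have w : f ≫ h.i.right = h.i.left ≫ g := h.i_w.symm
  refine ⟨⟨w⟩, ⟨PullbackCone.IsLimit.mk w (fun s => s.snd ≫ h.r.left) ?_ ?_ ?_⟩⟩
  · intro s
    simp [h.r_w, ← s.condition_assoc]
  · intro s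
    refine (cancel_mono g).1 ?_
    simp [h.i_w, h.r_w_assoc, ← s.condition_assoc, s.condition]
  · intro s m _ hm
    rw [← hm, Category.assoc, h.retract_left, Category.comp_id]

section

variable {E : Type u} [Category.{v} E]

lemma isComplementedInclusion_coprod_inl (X Y : E) [HasBinaryCoproduct X Y] :
    IsComplementedInclusion (coprod.inl : X ⟶ X ⨿ Y) :=
  ⟨Y, coprod.inr, ⟨coprodIsCoprod X Y⟩⟩

namespace IsComplementedInclusion

variable {X Y A B : E}

lemma mono [FinitaryExtensive E] {f : X ⟶ Y} (hf : IsComplementedInclusion f) : Mono f := by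
  obtain ⟨C, g, ⟨hc⟩⟩ := hf
  exact FinitaryExtensive.mono_inl_of_isColimit hc

lemma of_isPullback [FinitaryExtensive E] {f : X ⟶ Y} {a : X ⟶ A} {h : Y ⟶ B} {g : A ⟶ B}
    (hsq : IsPullback f a h g) (hg : IsComplementedInclusion g) : IsComplementedInclusion f := by
  obtain ⟨C, k, ⟨hc⟩⟩ := hg
  have : HasPullback h k := FinitaryPreExtensive.hasPullbacks_of_is_coproduct hc ⟨.right⟩ h
  have hP := IsPullback.of_hasPullback h k
  refine ⟨pullback h k, pullback.fst h k, ?_⟩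
  exact ((BinaryCofan.isVanKampen_iff _).mp (FinitaryExtensive.vanKampen _ hc)
    (BinaryCofan.mk f (pullback.fst h k)) a (pullback.snd h k) h hsq.w.symm hP.w.symm).mpr
    ⟨hsq, hP⟩

lemma hasLiftingProperty {f : X ⟶ Y} (hf : IsComplementedInclusion f) {p : A ⟶ B}
    [IsSplitEpi p] : HasLiftingProperty f p := by
  obtain ⟨C, g, ⟨hc⟩⟩ := hf
  refine ⟨fun {u v} sq => ?_⟩
  obtain ⟨l, hl₁, hl₂⟩ : { l : Y ⟶ A // f ≫ l = u ∧ g ≫ l = g ≫ v ≫ section_ p } :=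
    BinaryCofan.IsColimit.desc' hc _ _
  refine ⟨⟨⟨l, hl₁, BinaryCofan.IsColimit.hom_ext hc ?_ ?_⟩⟩⟩
  · change f ≫ l ≫ p = f ≫ v
    rw [reassoc_of% hl₁, sq.w]
  · change g ≫ l ≫ p = g ≫ v
    simp [reassoc_of% hl₂]

end IsComplementedInclusion

instance [FinitaryExtensive E] : (complementedInclusions E).IsStableUnderRetracts where
  of_retract h hg :=
    have := IsComplementedInclusion.mono hg
    IsComplementedInclusion.of_isPullback h.isPullback_of_mono hg

instance : (splitEpis E).IsStableUnderRetracts where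
  of_retract {_ _ _ _ _ p} h hp :=
    have : IsSplitEpi p := hp
    ⟨⟨h.i.right ≫ section_ p ≫ h.r.left, by simp [h.r_w]⟩⟩

instance [HasBinaryCoproducts E] :
    MorphismProperty.HasFactorization (complementedInclusions E) (splitEpis E) where
  nonempty_mapFactorizationData {X Y} f := ⟨
    { Z := X ⨿ Y
      i := coprod.inl
      p := coprod.desc f (𝟙 Y)
      fac := coprod.inl_desc _ _
      hi := isComplementedInclusion_coprod_inl X Y
      hp := ⟨⟨coprod.inr, coprod.inr_desc _ _⟩⟩ }⟩

end

theorem complementedInclusions_splitEpis_wfs_general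
    (E : Type u) [Category.{v} E] [FinitaryExtensive E] :
    IsWFS (complementedInclusions E) (splitEpis E) :=
  MorphismProperty.IsWeakFactorizationSystem.isWFS <|
    .mk' _ _ fun _ p hi hp => have : IsSplitEpi p := hp; hi.hasLiftingProperty

/-- **Statement 12.** Let `E` be a lextensive category.  Then the complemented inclusions and
the split epimorphisms form a weak factorisation system on `E`. -/
theorem complementedInclusions_splitEpis_wfs
    (E : Type u) [Category.{v} E] [HasFiniteLimits E] [FinitaryExtensive E] :
    IsWFS (complementedInclusions E) (splitEpis E) :=
  complementedInclusions_splitEpis_wfs_general E
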